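/- arXiv:1410.0483 — 3 statements merged into one kernel-verified Lean document; each statement's English description precedes it below -/
import Mathlib

section
/- Let S be a Cu-semigroup and let a, b ∈ S. Suppose there exists k ∈ ℕ such that (k+1)·λ(a) ≤ k·λ(b) for every functional λ on S. Then for every a' ∈ S with a' ≪ a there exists m ∈ ℕ with (m+1)·a' ≤ m·b. If moreover S is almost unperforated, then a ≤ b. -/
open scoped ENNReal

/-- The (sequential) way-below relation: `a ≪ b` if for every increasing
sequence `f` with a supremum `s` such that `b ≤ s`, some `f n` dominates `a`. -/
def CuWayBelow {S : Type*} [Preorder S] (a b : S) : Prop :=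
  ∀ f : ℕ → S, Monotone f → ∀ s : S, IsLUB (Set.range f) s → b ≤ s → ∃ n : ℕ, a ≤ f n

/-- An abstract Cu-semigroup: a positively ordered monoid satisfying the
axioms (O1)-(O4). -/
structure IsCuSemigroup (S : Type*) [AddCommMonoid S] [PartialOrder S] : Prop where
  /-- addition is order-preserving -/
  add_le_add : ∀ a b c : S, a ≤ b → a + c ≤ b + c
  /-- `0` is the least element -/
  zero_le : ∀ a : S, 0 ≤ a
  /-- (O1) every increasing sequence has a supremum -/
  O1 : ∀ f : ℕ → S, Monotone f → ∃ s : S, IsLUB (Set.range f) s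
  /-- (O2) every element is the supremum of a rapidly increasing sequence -/
  O2 : ∀ a : S, ∃ f : ℕ → S, (∀ n : ℕ, CuWayBelow (f n) (f (n + 1))) ∧ IsLUB (Set.range f) a
  /-- (O3) way-below is additive -/
  O3 : ∀ a' a b' b : S, CuWayBelow a' a → CuWayBelow b' b → CuWayBelow (a' + b') (a + b)
  /-- (O4) suprema of increasing sequences are additive -/
  O4 : ∀ f g : ℕ → S, Monotone f → Monotone g → ∀ s t : S, IsLUB (Set.range f) s →
    IsLUB (Set.range g) t → IsLUB (Set.range (fun n => f n + g n)) (s + t)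

/-- A functional on a Cu-semigroup: an additive, order-preserving map to
`[0,∞]` preserving `0` and suprema of increasing sequences. -/
structure IsCuFunctional {S : Type*} [AddCommMonoid S] [PartialOrder S] (l : S → ℝ≥0∞) : Prop where
  map_zero : l 0 = 0
  map_add : ∀ a b : S, l (a + b) = l a + l b
  mono : ∀ a b : S, a ≤ b → l a ≤ l b
  map_lub : ∀ f : ℕ → S, Monotone f → ∀ s : S, IsLUB (Set.range f) s → l s = ⨆ n : ℕ, l (f n)

/-!
If no `m` satisfies `(m + 1) • a' ≤ m • b`, a Hahn–Banach argument produces an additive, monotone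
`M : S → [0, ∞]` with `M b ≤ 1 ≤ M a'`. On the elements bounded by multiples of `b`, `M` is a
maximal (Zorn) partial state: the graph of `n • b ↦ n` is extended one element at a time by a value
between the lower and upper cuts the graph forces, and the hypothesis on `a'` is exactly what
allows the value `1` or more at `a'`. Off those elements `M` is `∞`. The regularization
`x ↦ ⨆ z ≪ x, M z` is then a functional with `λ b ≤ 1 ≤ λ a`, contradicting
`(k + 1) • λ a ≤ k • λ b`. Almost unperforation turns the first part into `a' ≤ b` for all
`a' ≪ a`, and (O2) gives `a ≤ b`.
-/

open scoped NNReal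

section PositivelyOrderedMonoid

variable {S : Type*} [AddCommMonoid S] [PartialOrder S] [IsOrderedAddMonoid S]

theorem nsmul_add_le_nsmul_add {x y s : S} (h : x + s ≤ y + s) (j : ℕ) :
    j • x + s ≤ j • y + s := by
  induction j with
  | zero => simp
  | succ j ih =>
    calc (j + 1) • x + s = x + (j • x + s) := by module
      _ ≤ x + (j • y + s) := by gcongr
      _ = (x + s) + j • y := by module
      _ ≤ (y + s) + j • y := by gcongr
      _ = (j + 1) • y + s := by module

def boundedBy (b : S) : AddSubmonoid S where
  carrier := {x | ∃ n : ℕ, x ≤ n • b}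
  add_mem' := fun ⟨n, hn⟩ ⟨m, hm⟩ => ⟨n + m, by rw [add_nsmul]; exact add_le_add hn hm⟩
  zero_mem' := ⟨0, by simp⟩

theorem self_mem_boundedBy (b : S) : b ∈ boundedBy b := ⟨1, by simp⟩

theorem mem_boundedBy_of_le {b x y : S} (hxy : x ≤ y) (hy : y ∈ boundedBy b) :
    x ∈ boundedBy b :=
  let ⟨n, hn⟩ := hy; ⟨n, hxy.trans hn⟩

/-- Iterating the hypothesis `d + 1` times, where `s ≤ d • b`, the surplus of at least
`d + 1` copies of `x` on the left outweighs the `d` copies of `b` needed to absorb `s`. -/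
theorem exists_succ_nsmul_le_of_nsmul_add_le (h0 : ∀ a : S, 0 ≤ a) {x b s : S} {k e : ℕ}
    (hs : s ∈ boundedBy b) (hek : e < k) (h : k • x + s ≤ e • b + s) :
    ∃ m : ℕ, (m + 1) • x ≤ m • b := by
  obtain ⟨d, hd⟩ := hs
  refine ⟨(d + 1) * e + d, ?_⟩
  calc ((d + 1) * e + d + 1) • x ≤ ((d + 1) * k) • x :=
        nsmul_le_nsmul_left (h0 x) (by nlinarith)
    _ ≤ (d + 1) • (k • x) + s := by rw [mul_nsmul']; exact le_add_of_nonneg_right (h0 s)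
    _ ≤ (d + 1) • (e • b) + s := nsmul_add_le_nsmul_add h (d + 1)
    _ ≤ (d + 1) • (e • b) + d • b := by gcongr
    _ = ((d + 1) * e + d) • b := by module

theorem le_of_nsmul_add_le_nsmul_add (h0 : ∀ a : S, 0 ≤ a) {x b s : S}
    (hx : x ∈ boundedBy b) (h : ∀ m : ℕ, ¬ (m + 1) • x ≤ m • b) (hs : s ∈ boundedBy b)
    {n m : ℕ} (hnm : n • b + s ≤ m • b + s) : n ≤ m := by
  by_contra! hmn
  obtain ⟨k, rfl⟩ := Nat.exists_eq_add_of_lt hmn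
  obtain ⟨c, hc⟩ := hx
  set s' := m • b + s
  have hb : (k + 1) • b + s' ≤ (0 : S) + s' := by
    convert hnm using 1 <;> module
  have hxs : 1 • x + s' ≤ 0 • b + s' :=
    calc 1 • x + s' ≤ c • ((k + 1) • b) + s' := by
          rw [one_nsmul, ← mul_nsmul']
          gcongr
          exact hc.trans (nsmul_le_nsmul_left (h0 b) (Nat.le_mul_of_pos_right c k.succ_pos))
      _ ≤ c • (0 : S) + s' := nsmul_add_le_nsmul_add hb c
      _ = 0 • b + s' := by simp
  obtain ⟨m, hm⟩ := exists_succ_nsmul_le_of_nsmul_add_le h0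
    (add_mem (nsmul_mem (self_mem_boundedBy b) m) hs) one_pos hxs
  exact h m hm

end PositivelyOrderedMonoid

section PartialState

variable {S : Type*} [AddCommMonoid S] [PartialOrder S] [IsOrderedAddMonoid S]

open AddSubmonoid

/-- `R` is the graph of a partial state: an additive map on the submonoid of first coordinates,
monotone for the preorder `x ≼ y ↔ ∃ t ∈ boundedBy b, x + t ≤ y + t`. -/
def IsPartialState (b : S) (R : AddSubmonoid (S × ℝ)) : Prop :=
  ∀ p ∈ R, ∀ q ∈ R, (∃ t ∈ boundedBy b, p.1 + t ≤ q.1 + t) → p.2 ≤ q.2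

/-- Any state extending `R` takes at `x` a value lying above `lowerCut b x R` and below
`upperCut b x R`. -/
def lowerCut (b x : S) (R : AddSubmonoid (S × ℝ)) : Set ℝ :=
  {r | ∃ p ∈ R, ∃ q ∈ R, ∃ k : ℕ, 0 < k ∧
    (∃ t ∈ boundedBy b, p.1 + t ≤ q.1 + k • x + t) ∧ r = (p.2 - q.2) / k}

def upperCut (b x : S) (R : AddSubmonoid (S × ℝ)) : Set ℝ :=
  {r | ∃ p ∈ R, ∃ q ∈ R, ∃ k : ℕ, 0 < k ∧
    (∃ t ∈ boundedBy b, k • x + p.1 + t ≤ q.1 + t) ∧ r = (q.2 - p.2) / k}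

namespace IsPartialState

variable {b : S} {R : AddSubmonoid (S × ℝ)}

theorem le_of_mem (hR : IsPartialState b R) {x y : S} {r s : ℝ} (hr : (x, r) ∈ R)
    (hs : (y, s) ∈ R) (hxy : x ≤ y) : r ≤ s :=
  hR _ hr _ hs ⟨0, zero_mem _, by simpa using hxy⟩

theorem eq_of_mem (hR : IsPartialState b R) {x : S} {r s : ℝ} (hr : (x, r) ∈ R)
    (hs : (x, s) ∈ R) : r = s :=
  (hR.le_of_mem hr hs le_rfl).antisymm (hR.le_of_mem hs hr le_rfl)

theorem lowerCut_le_upperCut (hR : IsPartialState b R) {x : S} (hx : x ∈ boundedBy b)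
    {l u : ℝ} (hl : l ∈ lowerCut b x R) (hu : u ∈ upperCut b x R) : l ≤ u := by
  obtain ⟨p, hp, q, hq, k, hk, ⟨t, ht, hle⟩, rfl⟩ := hl
  obtain ⟨p', hp', q', hq', k', hk', ⟨t', ht', hle'⟩, rfl⟩ := hu
  -- `k'` copies of the first relation plus `k` copies of the second: the `(k * k') • x`
  -- occurring on both sides goes into the slack
  have hcomb := hR (k' • p + k • p') (add_mem (nsmul_mem hp k') (nsmul_mem hp' k))
    (k' • q + k • q') (add_mem (nsmul_mem hq k') (nsmul_mem hq' k))
    ⟨(k * k') • x + k' • t + k • t', add_mem (add_mem (nsmul_mem hx _) (nsmul_mem ht _))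
      (nsmul_mem ht' _), ?_⟩
  · simp only [Prod.snd_add, Prod.smul_snd, nsmul_eq_mul] at hcomb
    rw [div_le_div_iff₀ (by exact_mod_cast hk) (by exact_mod_cast hk')]
    nlinarith
  · simp only [Prod.fst_add, Prod.smul_fst]
    calc k' • p.1 + k • p'.1 + ((k * k') • x + k' • t + k • t')
        = k' • (p.1 + t) + k • (k' • x + p'.1 + t') := by module
      _ ≤ k' • (q.1 + k • x + t) + k • (q'.1 + t') := by gcongr
      _ = k' • q.1 + k • q'.1 + ((k * k') • x + k' • t + k • t') := by module

theorem sup_closure (hR : IsPartialState b R) {x : S} (hx : x ∈ boundedBy b) {γ : ℝ}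
    (hlow : ∀ r ∈ lowerCut b x R, r ≤ γ) (hup : ∀ r ∈ upperCut b x R, γ ≤ r) :
    IsPartialState b (R ⊔ closure {(x, γ)}) := by
  rintro _ hp' _ hq' ⟨t, ht, hle⟩
  obtain ⟨p, hp, _, hn, rfl⟩ := mem_sup.1 hp'
  obtain ⟨n, rfl⟩ := mem_closure_singleton.1 hn
  obtain ⟨q, hq, _, hm, rfl⟩ := mem_sup.1 hq'
  obtain ⟨m, rfl⟩ := mem_closure_singleton.1 hm
  simp only [Prod.fst_add, Prod.snd_add, Prod.smul_mk, nsmul_eq_mul] at hle ⊢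
  have hnt : n • x + t ∈ boundedBy b := add_mem (nsmul_mem hx n) ht
  rcases lt_trichotomy n m with hnm | rfl | hmn
  · obtain ⟨k, rfl⟩ := Nat.exists_eq_add_of_lt hnm
    have := hlow _ ⟨p, hp, q, hq, k + 1, k.succ_pos,
      ⟨n • x + t, hnt, by convert hle using 1 <;> module⟩, rfl⟩
    rw [div_le_iff₀ (by positivity)] at this
    push_cast at this ⊢
    linarith
  · have := hR p hp q hq ⟨n • x + t, hnt, by convert hle using 1 <;> module⟩
    linarith
  · obtain ⟨k, rfl⟩ := Nat.exists_eq_add_of_lt hmn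
    have := hup _ ⟨p, hp, q, hq, k + 1, k.succ_pos,
      ⟨m • x + t, add_mem (nsmul_mem hx m) ht, by convert hle using 1 <;> module⟩, rfl⟩
    rw [le_div_iff₀ (by positivity)] at this
    push_cast at this ⊢
    linarith

theorem exists_sup_closure (hR : IsPartialState b R) (hb : (b, 1) ∈ R) {x : S}
    (hx : x ∈ boundedBy b) {c : ℝ} (hc : ∀ r ∈ upperCut b x R, c ≤ r) :
    ∃ γ, c ≤ γ ∧ IsPartialState b (R ⊔ closure {(x, γ)}) := by
  obtain ⟨n, hn⟩ := hx
  have hne : (n : ℝ) ∈ upperCut b x R := ⟨0, zero_mem R, n • (b, 1), nsmul_mem hb n, 1,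
    one_pos, ⟨0, zero_mem _, by simpa using hn⟩, by simp⟩
  refine ⟨sInf (upperCut b x R), le_csInf ⟨_, hne⟩ hc, hR.sup_closure ⟨n, hn⟩
    (fun l hl => le_csInf ⟨_, hne⟩ fun u hu => hR.lowerCut_le_upperCut ⟨n, hn⟩ hl hu)
    (fun u hu => csInf_le ⟨c, hc⟩ hu)⟩

theorem sSup_of_isChain {c : Set (AddSubmonoid (S × ℝ))} (hc : IsChain (· ≤ ·) c)
    (hne : c.Nonempty) (hcR : ∀ R ∈ c, IsPartialState b R) : IsPartialState b (sSup c) := by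
  intro p hp q hq hle
  obtain ⟨R₁, h₁, hp₁⟩ := (mem_sSup_of_directedOn hne hc.directedOn).1 hp
  obtain ⟨R₂, h₂, hq₂⟩ := (mem_sSup_of_directedOn hne hc.directedOn).1 hq
  obtain ⟨R₃, h₃, h₁₃, h₂₃⟩ := hc.directedOn R₁ h₁ R₂ h₂
  exact hcR R₃ h₃ p (h₁₃ hp₁) q (h₂₃ hq₂) hle

theorem zero_mem_lowerCut (h0 : ∀ a : S, 0 ≤ a) (x : S) : (0 : ℝ) ∈ lowerCut b x R :=
  ⟨0, zero_mem R, 0, zero_mem R, 1, one_pos, ⟨0, zero_mem _, by simpa using h0 x⟩, by simp⟩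

theorem exists_total (h0 : ∀ a : S, 0 ≤ a) (hR : IsPartialState b R) (hb : (b, 1) ∈ R) :
    ∃ R' ≥ R, IsPartialState b R' ∧ ∀ x ∈ boundedBy b, ∃ ρ, (x, ρ) ∈ R' := by
  obtain ⟨R', hRR', hmax⟩ := zorn_le_nonempty₀ {R' | IsPartialState b R'}
    (fun c hcs hc R hR => ⟨sSup c, sSup_of_isChain hc ⟨R, hR⟩ hcs, fun _ => le_sSup⟩) R hR
  refine ⟨R', hRR', hmax.prop, fun x hx => ?_⟩
  obtain ⟨γ, -, hγ⟩ := hmax.prop.exists_sup_closure (hRR' hb) hx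
    fun _ => hmax.prop.lowerCut_le_upperCut hx (zero_mem_lowerCut h0 x)
  exact ⟨γ, hmax.le_of_ge hγ le_sup_left (mem_sup_right (subset_closure rfl))⟩

theorem exists_addMonoidHom (h0 : ∀ a : S, 0 ≤ a) (hR : IsPartialState b R)
    (htot : ∀ x ∈ boundedBy b, ∃ ρ, (x, ρ) ∈ R) :
    ∃ v : boundedBy b →+ ℝ≥0, Monotone v ∧ ∀ x : boundedBy b, ((x : S), (v x : ℝ)) ∈ R := by
  choose ρ hρ using htot
  have hzero : ((0 : S), (0 : ℝ)) ∈ R := zero_mem R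
  let v : boundedBy b →+ ℝ≥0 :=
    { toFun := fun x => ⟨ρ x x.2, hR.le_of_mem hzero (hρ x x.2) (h0 x)⟩
      map_zero' := NNReal.eq (hR.eq_of_mem (hρ 0 _) hzero)
      map_add' := fun x y => NNReal.eq (hR.eq_of_mem (hρ _ _) (add_mem (hρ x x.2) (hρ y y.2))) }
  exact ⟨v, fun x y hxy => hR.le_of_mem (hρ x x.2) (hρ y y.2) hxy, fun x => hρ x x.2⟩

end IsPartialState

end PartialState

section States

variable {S : Type*} [AddCommMonoid S] [PartialOrder S] [IsOrderedAddMonoid S]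

open AddSubmonoid

theorem exists_monotone_extend_top (h0 : ∀ a : S, 0 ≤ a) (I : AddSubmonoid S)
    (hI : ∀ ⦃x y : S⦄, x ≤ y → y ∈ I → x ∈ I) (f : I →+ ℝ≥0∞) (hf : Monotone f) :
    ∃ M : S →+ ℝ≥0∞, Monotone M ∧ (∀ x : I, M x = f x) ∧ ∀ x ∉ I, M x = ⊤ := by
  classical
  have hI_add {x y : S} (h : x + y ∈ I) : x ∈ I ∧ y ∈ I :=
    ⟨hI (le_add_of_nonneg_right (h0 y)) h, hI (le_add_of_nonneg_left (h0 x)) h⟩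
  let M : S →+ ℝ≥0∞ :=
    { toFun := fun x => if hx : x ∈ I then f ⟨x, hx⟩ else ⊤
      map_zero' := by rw [dif_pos (zero_mem I)]; exact f.map_zero
      map_add' := fun x y => by
        by_cases hxy : x + y ∈ I
        · simp only [dif_pos hxy, dif_pos (hI_add hxy).1, dif_pos (hI_add hxy).2, ← map_add]
          rfl
        · have : ¬ (x ∈ I ∧ y ∈ I) := fun h => hxy (add_mem h.1 h.2)
          by_cases hx : x ∈ I <;> simp_all }
  refine ⟨M, fun x y hxy => ?_, fun x => dif_pos x.2, fun x hx => dif_neg hx⟩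
  by_cases hy : y ∈ I
  · simp only [M, AddMonoidHom.coe_mk, ZeroHom.coe_mk, dif_pos hy, dif_pos (hI hxy hy)]
    exact hf hxy
  · simp only [M, AddMonoidHom.coe_mk, ZeroHom.coe_mk, dif_neg hy]
    exact le_top

theorem isPartialState_closure_singleton (h0 : ∀ a : S, 0 ≤ a) {x b : S}
    (hx : x ∈ boundedBy b) (h : ∀ m : ℕ, ¬ (m + 1) • x ≤ m • b) :
    IsPartialState b (closure {(b, 1)}) := by
  rintro _ hp _ hq ⟨t, ht, hle⟩
  obtain ⟨n, rfl⟩ := mem_closure_singleton.1 hp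
  obtain ⟨m, rfl⟩ := mem_closure_singleton.1 hq
  simp only [Prod.smul_mk, nsmul_eq_mul, mul_one] at hle ⊢
  exact_mod_cast le_of_nsmul_add_le_nsmul_add h0 hx h ht hle

theorem one_le_of_mem_upperCut (h0 : ∀ a : S, 0 ≤ a) {x b : S} (hx : x ∈ boundedBy b)
    (h : ∀ m : ℕ, ¬ (m + 1) • x ≤ m • b) {r : ℝ} (hr : r ∈ upperCut b x (closure {(b, 1)})) :
    1 ≤ r := by
  obtain ⟨_, hp, _, hq, k, hk, ⟨t, ht, hle⟩, rfl⟩ := hr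
  obtain ⟨n, rfl⟩ := mem_closure_singleton.1 hp
  obtain ⟨m, rfl⟩ := mem_closure_singleton.1 hq
  simp only [Prod.smul_mk, nsmul_eq_mul, mul_one] at hle ⊢
  have hnm : n ≤ m := le_of_nsmul_add_le_nsmul_add h0 hx h ht
    ((le_add_of_nonneg_left (h0 _)).trans (by simpa only [add_assoc] using hle))
  obtain ⟨e, rfl⟩ := Nat.exists_eq_add_of_le hnm
  have hke : k ≤ e := by
    by_contra! hek
    have hle' : k • x + (n • b + t) ≤ e • b + (n • b + t) := by convert hle using 1 <;> module
    obtain ⟨m, hm⟩ := exists_succ_nsmul_le_of_nsmul_add_le h0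
      (add_mem (nsmul_mem (self_mem_boundedBy b) n) ht) hek hle'
    exact h m hm
  rw [le_div_iff₀ (by exact_mod_cast hk)]
  push_cast
  linarith [(Nat.cast_le (α := ℝ)).2 hke]

theorem exists_state_of_forall_not_succ_nsmul_le (h0 : ∀ a : S, 0 ≤ a) {x b : S}
    (h : ∀ m : ℕ, ¬ (m + 1) • x ≤ m • b) :
    ∃ M : S →+ ℝ≥0∞, Monotone M ∧ M b ≤ 1 ∧ 1 ≤ M x := by
  have hb := self_mem_boundedBy b
  by_cases hx : x ∈ boundedBy b
  · have hb₀ : ((b, 1) : S × ℝ) ∈ closure {(b, 1)} := subset_closure rfl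
    obtain ⟨γ, hγ, hR₁⟩ := (isPartialState_closure_singleton h0 hx h).exists_sup_closure
      hb₀ hx fun _ => one_le_of_mem_upperCut h0 hx h
    obtain ⟨R, hR₁R, hR, htot⟩ := hR₁.exists_total h0 (mem_sup_left hb₀)
    obtain ⟨v, hv, hvR⟩ := hR.exists_addMonoidHom h0 htot
    obtain ⟨M, hM, hMv, -⟩ := exists_monotone_extend_top h0 _ (fun _ _ => mem_boundedBy_of_le)
      ((ENNReal.ofNNRealHom : ℝ≥0 →+ ℝ≥0∞).comp v) (ENNReal.coe_mono.comp hv)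
    have hvb : v ⟨b, hb⟩ = 1 :=
      NNReal.coe_eq_one.1 (hR.eq_of_mem (hvR _) (hR₁R (mem_sup_left hb₀)))
    have hvx : (v ⟨x, hx⟩ : ℝ) = γ :=
      hR.eq_of_mem (hvR _) (hR₁R (mem_sup_right (subset_closure rfl)))
    refine ⟨M, hM, ?_, ?_⟩
    · rw [hMv ⟨b, hb⟩]
      exact ENNReal.coe_le_one_iff.2 hvb.le
    · rw [hMv ⟨x, hx⟩]
      exact ENNReal.one_le_coe_iff.2 (by rw [← NNReal.coe_le_coe, hvx]; exact_mod_cast hγ)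
  · obtain ⟨M, hM, hM0, hMtop⟩ := exists_monotone_extend_top h0 (boundedBy b)
      (fun _ _ => mem_boundedBy_of_le) 0 monotone_const
    exact ⟨M, hM, by simp [hM0 ⟨b, hb⟩], by simp [hMtop x hx]⟩

end States

section WayBelow

variable {S : Type*} [Preorder S] {x x' y y' : S}

theorem CuWayBelow.le (h : CuWayBelow x y) : x ≤ y := by
  obtain ⟨n, hn⟩ := h (fun _ => y) monotone_const y
    (by rw [Set.range_const]; exact isLUB_singleton) le_rfl
  exact hn

theorem CuWayBelow.mono (h : CuWayBelow x y) (hx : x' ≤ x) (hy : y ≤ y') :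
    CuWayBelow x' y' := fun f hf s hs hys =>
  let ⟨n, hn⟩ := h f hf s hs (hy.trans hys); ⟨n, hx.trans hn⟩

end WayBelow

namespace IsCuSemigroup

variable {S : Type*} [AddCommMonoid S] [PartialOrder S]

theorem isOrderedAddMonoid (hS : IsCuSemigroup S) : IsOrderedAddMonoid S where
  add_le_add_left a b h c := hS.add_le_add a b c h

theorem cuWayBelow_zero (hS : IsCuSemigroup S) (x : S) : CuWayBelow 0 x :=
  fun _ _ _ _ _ => ⟨0, hS.zero_le _⟩

theorem exists_cuWayBelow_seq (hS : IsCuSemigroup S) (x : S) :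
    ∃ f : ℕ → S, Monotone f ∧ IsLUB (Set.range f) x ∧
      ∀ n, CuWayBelow (f n) (f (n + 1)) ∧ CuWayBelow (f n) x := by
  obtain ⟨f, hf, hlub⟩ := hS.O2 x
  exact ⟨f, monotone_nat_of_le_succ fun n => (hf n).le, hlub,
    fun n => ⟨hf n, (hf n).mono le_rfl (hlub.1 ⟨n + 1, rfl⟩)⟩⟩

theorem exists_cuWayBelow_of_isLUB (hS : IsCuSemigroup S) {z s : S} (hz : CuWayBelow z s)
    {f : ℕ → S} (hf : Monotone f) (hs : IsLUB (Set.range f) s) : ∃ n, CuWayBelow z (f n) := by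
  obtain ⟨g, hg, hgs, hgwb⟩ := hS.exists_cuWayBelow_seq s
  obtain ⟨m, hm⟩ := hz g hg s hgs le_rfl
  obtain ⟨n, hn⟩ := (hgwb (m + 1)).2 f hf s hs le_rfl
  exact ⟨n, (hgwb m).1.mono hm hn⟩

theorem exists_cuWayBelow_add (hS : IsCuSemigroup S) {z x y : S}
    (hz : CuWayBelow z (x + y)) :
    ∃ x' y', CuWayBelow x' x ∧ CuWayBelow y' y ∧ z ≤ x' + y' := by
  have := hS.isOrderedAddMonoid
  obtain ⟨f, hf, hfx, hfwb⟩ := hS.exists_cuWayBelow_seq x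
  obtain ⟨g, hg, hgy, hgwb⟩ := hS.exists_cuWayBelow_seq y
  obtain ⟨n, hn⟩ := hz _ (hf.add hg) _ (hS.O4 f g hf hg x y hfx hgy) le_rfl
  exact ⟨f n, g n, (hfwb n).2, (hgwb n).2, hn⟩

theorem le_of_forall_cuWayBelow (hS : IsCuSemigroup S) {a b : S}
    (h : ∀ a', CuWayBelow a' a → a' ≤ b) : a ≤ b := by
  obtain ⟨f, -, hfa, hfwb⟩ := hS.exists_cuWayBelow_seq a
  exact hfa.2 (Set.forall_mem_range.2 fun n => h _ (hfwb n).2)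

end IsCuSemigroup

section Regularization

variable {S : Type*} [Preorder S]

noncomputable def cuRegularization (M : S → ℝ≥0∞) (x : S) : ℝ≥0∞ :=
  ⨆ z : {z : S // CuWayBelow z x}, M z

variable {M : S → ℝ≥0∞}

theorem le_cuRegularization {z x : S} (h : CuWayBelow z x) : M z ≤ cuRegularization M x :=
  le_iSup (fun w : {w // CuWayBelow w x} => M w) ⟨z, h⟩

theorem cuRegularization_le (hM : Monotone M) (x : S) : cuRegularization M x ≤ M x :=
  iSup_le fun z => hM z.2.le

theorem cuRegularization_mono : Monotone (cuRegularization M) := fun _ _ hxy =>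
  iSup_le fun z => le_cuRegularization (z.2.mono le_rfl hxy)

end Regularization

theorem isCuFunctional_cuRegularization {S : Type*} [AddCommMonoid S] [PartialOrder S]
    (hS : IsCuSemigroup S) (M : S →+ ℝ≥0∞) (hM : Monotone M) :
    IsCuFunctional (cuRegularization M) where
  map_zero := le_antisymm (iSup_le fun z => by
    rw [le_antisymm z.2.le (hS.zero_le _), map_zero]) bot_le
  map_add x y := by
    have : ∀ w : S, Nonempty {z // CuWayBelow z w} := fun w => ⟨⟨0, hS.cuWayBelow_zero w⟩⟩
    refine le_antisymm (iSup_le fun z => ?_) (ENNReal.iSup_add_iSup_le fun x' y' => ?_)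
    · obtain ⟨x', y', hx', hy', hz⟩ := hS.exists_cuWayBelow_add z.2
      calc M z ≤ M (x' + y') := hM hz
        _ = M x' + M y' := map_add M x' y'
        _ ≤ _ := add_le_add (le_cuRegularization hx') (le_cuRegularization hy')
    · rw [← map_add]
      exact le_cuRegularization (hS.O3 _ _ _ _ x'.2 y'.2)
  mono _ _ hxy := cuRegularization_mono hxy
  map_lub f hf s hs := le_antisymm
    (iSup_le fun z =>
      let ⟨n, hn⟩ := hS.exists_cuWayBelow_of_isLUB z.2 hf hs
      (le_cuRegularization hn).trans (le_iSup (fun n => cuRegularization M (f n)) n))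
    (iSup_le fun n => cuRegularization_mono (hs.1 ⟨n, rfl⟩))

theorem IsCuSemigroup.exists_succ_nsmul_le {S : Type*} [AddCommMonoid S] [PartialOrder S]
    (hS : IsCuSemigroup S) {a b : S} {k : ℕ}
    (hk : ∀ lam : S → ℝ≥0∞, IsCuFunctional lam → (k + 1) • lam a ≤ k • lam b)
    {a' : S} (ha' : CuWayBelow a' a) : ∃ m : ℕ, (m + 1) • a' ≤ m • b := by
  have := hS.isOrderedAddMonoid
  by_contra! h
  obtain ⟨M, hM, hMb, hMa'⟩ := exists_state_of_forall_not_succ_nsmul_le hS.zero_le h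
  have hb : cuRegularization M b ≤ 1 := (cuRegularization_le hM b).trans hMb
  have ha : 1 ≤ cuRegularization M a := hMa'.trans (le_cuRegularization ha')
  have hk' : ((k + 1 : ℕ) : ℝ≥0∞) ≤ k :=
    calc ((k + 1 : ℕ) : ℝ≥0∞) = (k + 1) • (1 : ℝ≥0∞) := by simp
      _ ≤ (k + 1) • cuRegularization M a := nsmul_le_nsmul_right ha _
      _ ≤ k • cuRegularization M b := hk _ (isCuFunctional_cuRegularization hS M hM)
      _ ≤ k • (1 : ℝ≥0∞) := nsmul_le_nsmul_right hb _
      _ = k := by simp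
  exact absurd (Nat.cast_le.1 hk') (Nat.not_succ_le_self k)

/-- Let `S` be a Cu-semigroup and `a b ∈ S`.  If there is
`k ∈ ℕ` with `(k+1)•λ(a) ≤ k•λ(b)` for every functional `λ`, then every
`a' ≪ a` satisfies `(m+1)•a' ≤ m•b` for some `m`; if moreover `S` is almost
unperforated, then `a ≤ b`. -/
theorem stmt15 {S : Type*} [AddCommMonoid S] [PartialOrder S]
    (hS : IsCuSemigroup S) (a b : S)
    (h : ∃ k : ℕ, ∀ lam : S → ℝ≥0∞, IsCuFunctional lam →
      (k + 1) • lam a ≤ k • lam b) :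
    (∀ a' : S, CuWayBelow a' a → ∃ m : ℕ, (m + 1) • a' ≤ m • b) ∧
    ((∀ x y : S, (∃ k : ℕ, (k + 1) • x ≤ k • y) → x ≤ y) → a ≤ b) := by
  obtain ⟨k, hk⟩ := h
  have hkey (a' : S) (ha' : CuWayBelow a' a) := hS.exists_succ_nsmul_le hk ha'
  exact ⟨hkey, fun hunp => hS.le_of_forall_cuWayBelow fun a' ha' => hunp a' b (hkey a' ha')⟩
end

section
/- Let S be a simple, stably finite Cu-semigroup satisfying (O5). Then a nonzero element a ∈ S is soft if and only if a is not compact. -/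
open scoped ENNReal

/-- An ideal of a Cu-semigroup: an order-hereditary submonoid closed under
suprema of increasing sequences. -/
structure IsCuIdeal {S : Type*} [AddCommMonoid S] [PartialOrder S] (I : Set S) : Prop where
  zero_mem : (0 : S) ∈ I
  add_mem : ∀ a b : S, a ∈ I → b ∈ I → a + b ∈ I
  mem_of_le : ∀ a b : S, a ≤ b → b ∈ I → a ∈ I
  lub_mem : ∀ f : ℕ → S, Monotone f → (∀ n : ℕ, f n ∈ I) → ∀ s : S, IsLUB (Set.range f) s → s ∈ I

/-- A Cu-semigroup is simple if its only ideals are `{0}` and the whole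
semigroup. -/
def CuSimple (S : Type*) [AddCommMonoid S] [PartialOrder S] : Prop :=
  ∀ I : Set S, IsCuIdeal I → I = {0} ∨ I = Set.univ

/-- Axiom (O5): almost algebraic order. -/
def CuO5 (S : Type*) [AddCommMonoid S] [PartialOrder S] : Prop :=
  ∀ a' a b' b c : S, a + b ≤ c → CuWayBelow a' a → CuWayBelow b' b →
    ∃ x : S, a' + x ≤ c ∧ c ≤ a + x ∧ b' ≤ x

/-- Axiom (O6): almost Riesz decomposition. -/
def CuO6 (S : Type*) [AddCommMonoid S] [PartialOrder S] : Prop :=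
  ∀ a' a b c : S, CuWayBelow a' a → a ≤ b + c →
    ∃ e f : S, a' ≤ e + f ∧ e ≤ a ∧ e ≤ b ∧ f ≤ a ∧ f ≤ c

/-- Weak cancellation: `a + x ≪ b + x` implies `a ≪ b`. -/
def CuWeaklyCancellative (S : Type*) [AddCommMonoid S] [PartialOrder S] : Prop :=
  ∀ a b x : S, CuWayBelow (a + x) (b + x) → CuWayBelow a b

/-- An element `a` of a Cu-semigroup is soft if every `a' ≪ a` satisfies
`(n+1)•a' ≤ n•a` for some `n`. -/
def CuSoft {S : Type*} [AddCommMonoid S] [PartialOrder S] (a : S) : Prop :=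
  ∀ a' : S, CuWayBelow a' a → ∃ n : ℕ, (n + 1) • a' ≤ n • a

section CuHelpers

variable {S : Type*} [AddCommMonoid S] [PartialOrder S]

lemma cu_add_le_add (hS : IsCuSemigroup S) {a b c d : S} (h1 : a ≤ b) (h2 : c ≤ d) :
    a + c ≤ b + d := by
  calc a + c ≤ b + c := hS.add_le_add a b c h1
    _ = c + b := add_comm _ _
    _ ≤ d + b := hS.add_le_add c d b h2
    _ = b + d := add_comm _ _

lemma cuwb_le_left {a b c : S} (h : a ≤ b) (hwb : CuWayBelow b c) : CuWayBelow a c := by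
  intro f hf s hs hle
  obtain ⟨n, hn⟩ := hwb f hf s hs hle
  exact ⟨n, le_trans h hn⟩

lemma cuwb_le_right {a b c : S} (hwb : CuWayBelow a b) (h : b ≤ c) : CuWayBelow a c := by
  intro f hf s hs hle
  exact hwb f hf s hs (le_trans h hle)

lemma cuwb_zero (hS : IsCuSemigroup S) : CuWayBelow (0 : S) 0 := by
  intro f _ s _ _
  exact ⟨0, hS.zero_le _⟩

lemma cuwb_nsmul (hS : IsCuSemigroup S) {a : S} (h : CuWayBelow a a) (n : ℕ) :
    CuWayBelow (n • a) (n • a) := by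
  induction n with
  | zero => simpa using cuwb_zero hS
  | succ k ih =>
      have := hS.O3 (k • a) (k • a) a a ih h
      simpa [succ_nsmul] using this

lemma cu_nsmul_le_nsmul (hS : IsCuSemigroup S) {a b : S} (h : a ≤ b) (n : ℕ) :
    n • a ≤ n • b := by
  induction n with
  | zero => simp
  | succ k ih =>
      have := cu_add_le_add hS ih h
      simpa [succ_nsmul] using this

lemma cu_nsmul_mono (hS : IsCuSemigroup S) (x : S) : Monotone (fun n : ℕ => n • x) := by
  apply monotone_nat_of_le_succ
  intro n
  have : n • x + 0 ≤ n • x + x := cu_add_le_add hS (le_refl _) (hS.zero_le x)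
  simpa [succ_nsmul] using this

end CuHelpers

/-- Let `S` be a simple, stably finite Cu-semigroup
satisfying (O5).  Then a nonzero element `a ∈ S` is soft iff it is not
compact. -/
theorem stmt16 {S : Type*} [AddCommMonoid S] [PartialOrder S]
    (hS : IsCuSemigroup S) (hsimple : CuSimple S)
    (hsf : ∀ a b : S, CuWayBelow a b → ∀ c : S, a + c = a → c = 0)
    (hO5 : CuO5 S)
    (a : S) (ha : a ≠ 0) :
    CuSoft a ↔ ¬ CuWayBelow a a := by
  constructor
  · -- soft implies not compact
    intro hsoft hcpt
    obtain ⟨n, hn⟩ := hsoft a hcpt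
    have hge : n • a ≤ (n + 1) • a := by
      have : n • a + 0 ≤ n • a + a := cu_add_le_add hS (le_refl _) (hS.zero_le a)
      simpa [succ_nsmul] using this
    have heq : n • a + a = n • a := by
      have h1 : n • a + a = (n + 1) • a := (succ_nsmul a n).symm
      rw [h1]
      exact le_antisymm hn hge
    have := hsf (n • a) (n • a) (cuwb_nsmul hS hcpt n) a heq
    exact ha this
  · -- not compact implies soft
    intro hnc a' ha'
    -- interpolate: a' ≪ a'' ≪ a
    obtain ⟨g, hg, hglub⟩ := hS.O2 a
    have hgmono : Monotone g := by
      apply monotone_nat_of_le_succ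
      intro n
      have hlub : IsLUB (Set.range fun _ : ℕ => g (n + 1)) (g (n + 1)) := by
        rw [Set.range_const]; exact isLUB_singleton
      obtain ⟨m, hm⟩ := hg n (fun _ => g (n + 1)) monotone_const (g (n + 1)) hlub (le_refl _)
      exact hm
    obtain ⟨k, hk⟩ := ha' g hgmono a hglub (le_refl a)
    set a'' := g (k + 1) with ha''def
    have h1 : CuWayBelow a' a'' := cuwb_le_left hk (hg k)
    have h2 : CuWayBelow a'' a :=
      cuwb_le_right (hg (k + 1)) (hglub.1 ⟨k + 2, rfl⟩)
    -- O5 gives x with a' + x ≤ a ≤ a'' + x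
    have hle : a'' + 0 ≤ a := by
      rw [add_zero]
      obtain ⟨m, hm⟩ := h2 g hgmono a hglub (le_refl a)
      exact le_trans hm (hglub.1 ⟨m, rfl⟩)
    obtain ⟨x, hx1, hx2, _⟩ := hO5 a' a'' 0 0 a hle h1 (cuwb_zero hS)
    have hx1' : a' + x ≤ a := hx1
    -- x ≠ 0
    have hxne : x ≠ 0 := by
      intro hx0
      apply hnc
      rw [hx0, add_zero] at hx2
      exact cuwb_le_right (cuwb_le_left hx2 h2) (le_refl a)
    -- the ideal generated by x
    obtain ⟨w, hw⟩ := hS.O1 (fun n : ℕ => n • x) (cu_nsmul_mono hS x)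
    have hwub : ∀ n : ℕ, n • x ≤ w := fun n => hw.1 ⟨n, rfl⟩
    have hww : w + w ≤ w := by
      have hlub2 := hS.O4 (fun n : ℕ => n • x) (fun n : ℕ => n • x)
        (cu_nsmul_mono hS x) (cu_nsmul_mono hS x) w w hw hw
      apply hlub2.2
      rintro y ⟨n, rfl⟩
      have : n • x + n • x = (n + n) • x := (add_nsmul x n n).symm
      simp only [this]
      exact hwub (n + n)
    set I : Set S := {s | s ≤ w} with hIdef
    have hI : IsCuIdeal I := by
      refine ⟨hS.zero_le w, ?_, ?_, ?_⟩
      · intro p q hp hq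
        exact le_trans (cu_add_le_add hS hp hq) hww
      · intro p q hpq hq
        exact le_trans hpq hq
      · intro f hf hfI s hs
        exact hs.2 (by rintro y ⟨n, rfl⟩; exact hfI n)
    have hxI : x ∈ I := by
      have := hwub 1
      simpa [hIdef] using this
    rcases hsimple I hI with hI0 | hIuniv
    · exfalso
      apply hxne
      have : x ∈ ({0} : Set S) := hI0 ▸ hxI
      simpa using this
    · -- a ≤ w, so a' ≤ n • x for some n
      have haw : a ≤ w := by
        have : a ∈ I := hIuniv ▸ Set.mem_univ a
        exact this
      obtain ⟨n, hn⟩ := ha' (fun n : ℕ => n • x) (cu_nsmul_mono hS x) w hw haw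
      refine ⟨n, ?_⟩
      calc (n + 1) • a' = n • a' + a' := succ_nsmul a' n
        _ ≤ n • a' + n • x := cu_add_le_add hS (le_refl _) hn
        _ = n • (a' + x) := (nsmul_add a' x n).symm
        _ ≤ n • a := cu_nsmul_le_nsmul hS hx1' n
end

section
/- Let S be a simple Cu-semigroup satisfying (O5). Then S is stably finite and nearly unperforated if and only if S is weakly cancellative and almost unperforated. -/
open scoped ENNReal

section Helpers
variable {S : Type*} [AddCommMonoid S] [PartialOrder S]

lemma cu_le_add_right (hS : IsCuSemigroup S) (a b : S) : a ≤ a + b := by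
  calc a = a + 0 := (add_zero a).symm
    _ ≤ a + b := cu_add_le_add hS le_rfl (hS.zero_le b)

lemma cu_le_add_left (hS : IsCuSemigroup S) (a b : S) : a ≤ b + a := by
  rw [add_comm]; exact cu_le_add_right hS a b

lemma cu_smul_le (hS : IsCuSemigroup S) {a b : S} (h : a ≤ b) (k : ℕ) : k • a ≤ k • b := by
  induction k with
  | zero => simp
  | succ n ih => rw [succ_nsmul, succ_nsmul]; exact cu_add_le_add hS ih h

lemma cu_smul_coeff_le (hS : IsCuSemigroup S) (a : S) {j k : ℕ} (h : j ≤ k) :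
    j • a ≤ k • a := by
  obtain ⟨t, rfl⟩ := Nat.exists_eq_add_of_le h
  rw [add_nsmul]; exact cu_le_add_right hS _ _

lemma wb_le (hS : IsCuSemigroup S) {a b : S} (h : CuWayBelow a b) : a ≤ b := by
  obtain ⟨n, hn⟩ := h (fun _ => b) monotone_const b
    (by rw [Set.range_const]; exact isLUB_singleton) le_rfl
  exact hn

lemma wb_mono {a' a b b' : S} (h1 : a' ≤ a) (h2 : CuWayBelow a b) (h3 : b ≤ b') :
    CuWayBelow a' b' := fun f hf s hs hbs =>
  (h2 f hf s hs (h3.trans hbs)).imp fun _ hn => h1.trans hn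

lemma zero_wb (hS : IsCuSemigroup S) (b : S) : CuWayBelow (0 : S) b :=
  fun _ _ _ _ _ => ⟨0, hS.zero_le _⟩

lemma rapid_mono (hS : IsCuSemigroup S) {f : ℕ → S} (hf : ∀ n, CuWayBelow (f n) (f (n+1))) :
    Monotone f :=
  monotone_nat_of_le_succ fun n => wb_le hS (hf n)

lemma wb_interp (hS : IsCuSemigroup S) {a b : S} (h : CuWayBelow a b) :
    ∃ c, CuWayBelow a c ∧ CuWayBelow c b := by
  obtain ⟨g, hg, hgl⟩ := hS.O2 b
  obtain ⟨n, hn⟩ := h g (rapid_mono hS hg) b hgl le_rfl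
  exact ⟨g (n+1), wb_mono hn (hg n) le_rfl,
    wb_mono le_rfl (hg (n+1)) (hgl.1 ⟨n+2, rfl⟩)⟩

lemma le_of_forall_wb (hS : IsCuSemigroup S) {a b : S}
    (h : ∀ a', CuWayBelow a' a → a' ≤ b) : a ≤ b := by
  obtain ⟨g, hg, hgl⟩ := hS.O2 a
  refine hgl.2 fun y hy => ?_
  obtain ⟨n, rfl⟩ := hy
  exact h _ (wb_mono le_rfl (hg n) (hgl.1 ⟨n+1, rfl⟩))

lemma wb_smul (hS : IsCuSemigroup S) {a b : S} (h : CuWayBelow a b) (k : ℕ) :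
    CuWayBelow (k • a) (k • b) := by
  induction k with
  | zero => simpa using zero_wb hS (0 : S)
  | succ n ih => rw [succ_nsmul, succ_nsmul]; exact hS.O3 _ _ _ _ ih h

/-- O5-subtraction: from `p ≪ q ≤ r` produce `x` with `p + x ≤ r ≤ q + x`. -/
lemma cu_sub (hS : IsCuSemigroup S) (hO5 : CuO5 S) {p q r : S}
    (h1 : CuWayBelow p q) (h2 : q ≤ r) : ∃ x, p + x ≤ r ∧ r ≤ q + x := by
  obtain ⟨x, hx1, hx2, _⟩ := hO5 p q 0 0 r (by simpa using h2) h1 (zero_wb hS 0)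
  exact ⟨x, hx1, hx2⟩

/-- In a simple Cu-semigroup, every nonzero element is full. -/
lemma cu_full (hS : IsCuSemigroup S) (hsimple : CuSimple S) {c : S} (hc : c ≠ 0) :
    ∀ y y' : S, CuWayBelow y' y → ∃ n : ℕ, y' ≤ n • c := by
  set I : Set S := {y | ∀ y', CuWayBelow y' y → ∃ n : ℕ, y' ≤ n • c} with hIdef
  have hIdeal : IsCuIdeal I := by
    constructor
    · intro y' hy'
      exact ⟨0, by simpa using wb_le hS hy'⟩
    · intro u v hu hv z hz
      obtain ⟨f, hf, hfl⟩ := hS.O2 u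
      obtain ⟨g, hg, hgl⟩ := hS.O2 v
      have hfm := rapid_mono hS hf
      have hgm := rapid_mono hS hg
      have hsum : IsLUB (Set.range fun n => f n + g n) (u + v) :=
        hS.O4 f g hfm hgm u v hfl hgl
      obtain ⟨n, hn⟩ := hz _ (fun i j hij => cu_add_le_add hS (hfm hij) (hgm hij)) _ hsum le_rfl
      obtain ⟨p, hp⟩ := hu (f n) (wb_mono le_rfl (hf n) (hfl.1 ⟨n+1, rfl⟩))
      obtain ⟨q, hq⟩ := hv (g n) (wb_mono le_rfl (hg n) (hgl.1 ⟨n+1, rfl⟩))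
      exact ⟨p + q, by rw [add_nsmul]; exact hn.trans (cu_add_le_add hS hp hq)⟩
    · intro u v huv hv z hz
      exact hv z (wb_mono le_rfl hz huv)
    · intro f hf hmem s hls z hz
      obtain ⟨w, hzw, hws⟩ := wb_interp hS hz
      obtain ⟨n, hn⟩ := hws f hf s hls le_rfl
      exact hmem n z (wb_mono le_rfl hzw hn)
  rcases hsimple I hIdeal with h0 | huniv
  · exfalso
    apply hc
    have hcI : c ∈ I := fun y' hy' => ⟨1, by simpa using wb_le hS hy'⟩
    rw [h0] at hcI
    exact hcI
  · intro y y' h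
    have hy : y ∈ I := by rw [huniv]; exact Set.mem_univ y
    exact hy y' h

end Helpers

/-- Let `S` be a simple Cu-semigroup satisfying (O5).  Then
`S` is stably finite and nearly unperforated if and only if `S` is weakly
cancellative and almost unperforated. -/
theorem stmt17 {S : Type*} [AddCommMonoid S] [PartialOrder S]
    (hS : IsCuSemigroup S) (hsimple : CuSimple S) (hO5 : CuO5 S) :
    ((∀ a b : S, CuWayBelow a b → ∀ c : S, a + c = a → c = 0) ∧
      (∀ a b : S, (∃ k₀ : ℕ, ∀ k : ℕ, k₀ ≤ k → k • a ≤ k • b) → a ≤ b))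
    ↔ (CuWeaklyCancellative S ∧
      (∀ a b : S, (∃ k : ℕ, (k + 1) • a ≤ k • b) → a ≤ b)) := by
  constructor
  · rintro ⟨hSF, hNU⟩
    -- almost unperforation from near unperforation
    have hAU : ∀ a b : S, (∃ k : ℕ, (k + 1) • a ≤ k • b) → a ≤ b := by
      rintro a b ⟨k, hk⟩
      rcases Nat.eq_zero_or_pos k with rfl | hkpos
      · have h1 : a ≤ 0 := by simpa using hk
        exact h1.trans (hS.zero_le b)
      · apply hNU a b
        refine ⟨k * k * (k + 1), fun m hm => ?_⟩
        have hkb : a ≤ k • b := by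
          calc a = 1 • a := (one_nsmul a).symm
            _ ≤ (k + 1) • a := cu_smul_coeff_le hS a (by omega)
            _ ≤ k • b := hk
        set q := m / (k + 1) with hq
        set r := m % (k + 1) with hr
        have hmeq : (k + 1) * q + r = m := Nat.div_add_mod m (k + 1)
        have hrlt : r ≤ k := by
          have := Nat.mod_lt m (show 0 < k + 1 by omega)
          omega
        have hqge : k * k ≤ q := by
          rw [hq]
          exact (Nat.le_div_iff_mul_le (show 0 < k + 1 by omega)).mpr hm
        have h2 : m • a ≤ (q * k + r * k) • b := by
          calc m • a = ((k + 1) * q + r) • a := by rw [hmeq]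
            _ = ((k + 1) * q) • a + r • a := add_nsmul a _ _
            _ = (q * (k + 1)) • a + r • a := by rw [Nat.mul_comm]
            _ = q • ((k + 1) • a) + r • a := by rw [mul_nsmul' a q (k+1)]
            _ ≤ q • (k • b) + r • (k • b) :=
                cu_add_le_add hS (cu_smul_le hS hk q) (cu_smul_le hS hkb r)
            _ = (q * k) • b + (r * k) • b := by rw [mul_nsmul' b q k, mul_nsmul' b r k]
            _ = (q * k + r * k) • b := (add_nsmul b _ _).symm
        refine h2.trans (cu_smul_coeff_le hS b ?_)
        calc q * k + r * k ≤ q * k + k * k := Nat.add_le_add_left (Nat.mul_le_mul_right k hrlt) _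
          _ ≤ q * k + q := Nat.add_le_add_left hqge _
          _ = (k + 1) * q := by ring
          _ ≤ m := Nat.le.intro hmeq
    refine ⟨?_, hAU⟩
    -- weak cancellation
    intro a b c hwb
    obtain ⟨g, hg, hgl⟩ := hS.O2 b
    obtain ⟨h, hh, hhl⟩ := hS.O2 c
    have hgm := rapid_mono hS hg
    have hhm := rapid_mono hS hh
    have hsum : IsLUB (Set.range fun n => g n + h n) (b + c) := hS.O4 g h hgm hhm b c hgl hhl
    obtain ⟨N, hN⟩ := hwb _ (fun i j hij => cu_add_le_add hS (hgm hij) (hhm hij)) _ hsum le_rfl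
    set b2 := g (N + 2) with hb2def
    have hb2b : CuWayBelow b2 b := wb_mono le_rfl (hg (N + 2)) (hgl.1 ⟨N + 3, rfl⟩)
    set c0 := h N with hc0def
    set c2 := h (N + 3) with hc2def
    have hbase : a + c ≤ b2 + c0 :=
      hN.trans (cu_add_le_add hS (hgm (show N ≤ N + 2 by omega)) le_rfl)
    have hc0c : CuWayBelow c0 c := wb_mono le_rfl (hh N) (hhl.1 ⟨N + 1, rfl⟩)
    have hc2c : CuWayBelow c2 c := wb_mono le_rfl (hh (N + 3)) (hhl.1 ⟨N + 4, rfl⟩)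
    have hc2le : c2 ≤ c := wb_le hS hc2c
    have hc0le2 : c0 ≤ c2 := hhm (show N ≤ N + 3 by omega)
    by_cases hb20 : b2 = 0
    · -- then a = 0
      have h1 : a + c ≤ c0 := by
        have := hbase
        rw [hb20, zero_add] at this
        exact this
      have hcc0 : c ≤ c0 := (cu_le_add_left hS c a).trans h1
      have hccpt : CuWayBelow c c := wb_mono hcc0 (hh N) (hhl.1 ⟨N + 1, rfl⟩)
      have hca : c + a = c := by
        apply le_antisymm
        · calc c + a = a + c := add_comm _ _
            _ ≤ c0 := h1
            _ ≤ c := hhl.1 ⟨N, rfl⟩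
        · exact cu_le_add_right hS c a
      have ha0 : a = 0 := hSF c c hccpt a hca
      rw [ha0]
      exact zero_wb hS b
    · suffices hsuf : a ≤ b2 by exact wb_mono hsuf hb2b le_rfl
      by_cases hgap : ∃ w : S, ¬ w = 0 ∧ c0 + w ≤ c2
      · -- gap case: use almost unperforation
        obtain ⟨w, hw0, hwc⟩ := hgap
        have hwc2 : w ≤ c2 := (cu_le_add_left hS w c0).trans hwc
        have hwwc : CuWayBelow w c := wb_mono hwc2 hc2c le_rfl
        obtain ⟨qn, hq⟩ := cu_full hS hsimple hb20 c w hwwc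
        obtain ⟨t, ht⟩ := cu_full hS hsimple hw0 c c0 hc0c
        have hbw : (a + w) + c0 ≤ b2 + c0 := by
          calc (a + w) + c0 = a + (c0 + w) := by abel
            _ ≤ a + c2 := cu_add_le_add hS le_rfl hwc
            _ ≤ a + c := cu_add_le_add hS le_rfl hc2le
            _ ≤ b2 + c0 := hbase
        have hiter : ∀ k : ℕ, k • (a + w) + c0 ≤ k • b2 + c0 := by
          intro k
          induction k with
          | zero => simp
          | succ n ih =>
            calc (n + 1) • (a + w) + c0 = (a + w) + (n • (a + w) + c0) := by
                  rw [succ_nsmul]; abel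
              _ ≤ (a + w) + (n • b2 + c0) := cu_add_le_add hS le_rfl ih
              _ = n • b2 + ((a + w) + c0) := by abel
              _ ≤ n • b2 + (b2 + c0) := cu_add_le_add hS le_rfl hbw
              _ = (n + 1) • b2 + c0 := by rw [succ_nsmul]; abel
        apply le_of_forall_wb hS
        intro a1 ha1
        obtain ⟨p, hp⟩ := cu_full hS hsimple hw0 a a1 ha1
        set k := p * (t * qn + 1) with hkdef
        have hstep : (k + (t * qn + 1)) • a1 ≤ k • (a + w) := by
          calc (k + (t * qn + 1)) • a1 = k • a1 + (t * qn + 1) • a1 := add_nsmul a1 _ _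
            _ ≤ k • a + (t * qn + 1) • (p • w) :=
                cu_add_le_add hS (cu_smul_le hS (wb_le hS ha1) k) (cu_smul_le hS hp _)
            _ = k • a + ((t * qn + 1) * p) • w := by rw [mul_nsmul' w (t * qn + 1) p]
            _ = k • a + k • w := by rw [show (t * qn + 1) * p = k by rw [hkdef]; ring]
            _ = k • (a + w) := (nsmul_add a w k).symm
        have hfin : k • (a + w) ≤ (k + t * qn) • b2 := by
          calc k • (a + w) ≤ k • (a + w) + c0 := cu_le_add_right hS _ _
            _ ≤ k • b2 + c0 := hiter k
            _ ≤ k • b2 + t • w := cu_add_le_add hS le_rfl ht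
            _ ≤ k • b2 + t • (qn • b2) := cu_add_le_add hS le_rfl (cu_smul_le hS hq t)
            _ = k • b2 + (t * qn) • b2 := by rw [mul_nsmul' b2 t qn]
            _ = (k + t * qn) • b2 := (add_nsmul b2 _ _).symm
        apply hAU a1 b2
        refine ⟨k + t * qn, ?_⟩
        calc (k + t * qn + 1) • a1 = (k + (t * qn + 1)) • a1 := by
              rw [show k + t * qn + 1 = k + (t * qn + 1) by omega]
          _ ≤ k • (a + w) := hstep
          _ ≤ (k + t * qn) • b2 := hfin
      · -- no gap: c2 is compact, use the smul-equality trick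
        have hz : ∀ w : S, c0 + w ≤ c2 → w = 0 := by
          intro w hw
          by_contra h0
          exact hgap ⟨w, h0, hw⟩
        obtain ⟨y, hy1, hy2⟩ := cu_sub hS hO5 (hh N) (hhm (show N + 1 ≤ N + 3 by omega))
        have hy0 : y = 0 := hz y hy1
        rw [hy0, add_zero] at hy2
        -- c2 ≤ h (N+1), so c2 is compact
        have hGcpt : CuWayBelow c2 c2 :=
          wb_mono hy2 (hh (N + 1)) (hhm (show N + 2 ≤ N + 3 by omega))
        have hGab : c2 + a ≤ c2 + b2 := by
          calc c2 + a = a + c2 := add_comm _ _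
            _ ≤ a + c := cu_add_le_add hS le_rfl hc2le
            _ ≤ b2 + c0 := hbase
            _ ≤ b2 + c2 := cu_add_le_add hS le_rfl hc0le2
            _ = c2 + b2 := add_comm _ _
        apply le_of_forall_wb hS
        intro a1 ha1
        obtain ⟨x, hx1, hx2, hx3⟩ := hO5 c2 c2 a1 a (c2 + b2) hGab hGcpt ha1
        have hE : c2 + x = c2 + b2 := le_antisymm hx1 hx2
        by_cases hx0 : x = 0
        · rw [hx0] at hx3
          exact hx3.trans (hS.zero_le b2)
        · obtain ⟨s, hs⟩ := cu_full hS hsimple hx0 c2 c2 hGcpt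
          obtain ⟨m, hm⟩ := cu_full hS hsimple hb20 c2 c2 hGcpt
          obtain ⟨e, he1, he2⟩ := cu_sub hS hO5 hGcpt hs
          have hEx : s • x = c2 + e := le_antisymm he2 he1
          obtain ⟨f, hf1, hf2⟩ := cu_sub hS hO5 hGcpt hm
          have hEb : m • b2 = c2 + f := le_antisymm hf2 hf1
          have id1 : s • x + b2 = s • x + x := by
            calc s • x + b2 = (c2 + b2) + e := by rw [hEx]; abel
              _ = (c2 + x) + e := by rw [hE]
              _ = (c2 + e) + x := by abel
              _ = s • x + x := by rw [← hEx]
          have id2 : m • b2 + x = m • b2 + b2 := by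
            calc m • b2 + x = (c2 + x) + f := by rw [hEb]; abel
              _ = (c2 + b2) + f := by rw [hE]
              _ = (c2 + f) + b2 := by abel
              _ = m • b2 + b2 := by rw [← hEb]
          have claim1 : ∀ j : ℕ, (s + j) • x = s • x + j • b2 := by
            intro j
            induction j with
            | zero => simp
            | succ n ih =>
              calc (s + (n + 1)) • x = (s + n) • x + x := by
                    rw [show s + (n + 1) = (s + n) + 1 by omega, succ_nsmul]
                _ = (s • x + n • b2) + x := by rw [ih]
                _ = (s • x + x) + n • b2 := by abel
                _ = (s • x + b2) + n • b2 := by rw [← id1]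
                _ = s • x + (n + 1) • b2 := by rw [succ_nsmul]; abel
          have claim2 : ∀ j : ℕ, (m + j) • b2 = m • b2 + j • x := by
            intro j
            induction j with
            | zero => simp
            | succ n ih =>
              calc (m + (n + 1)) • b2 = (m + n) • b2 + b2 := by
                    rw [show m + (n + 1) = (m + n) + 1 by omega, succ_nsmul]
                _ = (m • b2 + n • x) + b2 := by rw [ih]
                _ = (m • b2 + b2) + n • x := by abel
                _ = (m • b2 + x) + n • x := by rw [← id2]
                _ = m • b2 + (n + 1) • x := by rw [succ_nsmul]; abel
          have hkey : ∀ j : ℕ, (s + m + j) • x = (s + m + j) • b2 := by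
            intro j
            calc (s + m + j) • x = (s + (m + j)) • x := by rw [show s + m + j = s + (m + j) by omega]
              _ = s • x + (m + j) • b2 := claim1 (m + j)
              _ = s • x + (m • b2 + j • x) := by rw [claim2 j]
              _ = (s • x + j • x) + m • b2 := by abel
              _ = (s + j) • x + m • b2 := by rw [add_nsmul]
              _ = m • b2 + (s + j) • x := add_comm _ _
              _ = (m + (s + j)) • b2 := (claim2 (s + j)).symm
              _ = (s + m + j) • b2 := by rw [show m + (s + j) = s + m + j by omega]
          have hprem : ∃ k₀ : ℕ, ∀ k : ℕ, k₀ ≤ k → k • x ≤ k • b2 := by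
            refine ⟨s + m, fun k hk => ?_⟩
            obtain ⟨j, rfl⟩ := Nat.exists_eq_add_of_le hk
            exact (hkey j).le
          exact hx3.trans (hNU x b2 hprem)
  · rintro ⟨hWC, hAU⟩
    constructor
    · -- stable finiteness
      intro a b hab c hac
      by_cases hc : c = 0
      · exact hc
      · have hfull := cu_full hS hsimple hc
        obtain ⟨g, hg, hgl⟩ := hS.O2 b
        have hgm := rapid_mono hS hg
        have hmc : ∀ m : ℕ, a + m • c = a := by
          intro m
          induction m with
          | zero => simp
          | succ n ih =>
            calc a + (n + 1) • c = (a + n • c) + c := by rw [succ_nsmul]; abel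
              _ = a + c := by rw [ih]
              _ = a := hac
        have hba : ∀ n : ℕ, g n + a ≤ a := by
          intro n
          obtain ⟨mn, hmn⟩ := hfull b (g n) (wb_mono le_rfl (hg n) (hgl.1 ⟨n + 1, rfl⟩))
          calc g n + a ≤ mn • c + a := hS.add_le_add _ _ _ hmn
            _ = a + mn • c := add_comm _ _
            _ = a := hmc mn
        have hbs : IsLUB (Set.range fun n => g n + a) (b + a) :=
          hS.O4 g (fun _ => a) hgm monotone_const b a hgl
            (by rw [Set.range_const]; exact isLUB_singleton)
        have hbaa : b + a ≤ a := by
          refine hbs.2 fun y hy => ?_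
          obtain ⟨n, rfl⟩ := hy
          exact hba n
        have hcle : c ≤ a := by
          calc c = 0 + c := (zero_add c).symm
            _ ≤ a + c := hS.add_le_add _ _ _ (hS.zero_le a)
            _ = a := hac
        have hcb : c + b ≤ a := by
          calc c + b ≤ a + b := hS.add_le_add _ _ _ hcle
            _ = b + a := add_comm _ _
            _ ≤ a := hbaa
        have hc0b : CuWayBelow (c + b) (0 + b) := wb_mono hcb hab (zero_add b).symm.le
        have := wb_le hS (hWC c 0 b hc0b)
        exact le_antisymm this (hS.zero_le c)
    · -- near unperforation
      rintro a b ⟨k₀, hk⟩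
      set K := max k₀ 1 with hKdef
      have hK : ∀ k : ℕ, K ≤ k → k • a ≤ k • b := fun k hk' =>
        hk k (le_trans (le_max_left _ _) hk')
      have hK1 : 1 ≤ K := le_max_right _ _
      apply le_of_forall_wb hS
      intro a' ha'
      obtain ⟨a'', h1, h2⟩ := wb_interp hS ha'
      obtain ⟨x, hx1, hx2⟩ := cu_sub hS hO5 h1 (wb_le hS h2)
      by_cases hx : x = 0
      · -- a is compact
        rw [hx, add_zero] at hx2
        have haa : CuWayBelow a a := wb_mono hx2 h2 le_rfl
        have hja : CuWayBelow (K • a) (K • a) := wb_smul hS haa K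
        obtain ⟨u, hu1, hu2⟩ := cu_sub hS hO5 hja (hK K le_rfl)
        have hEq : K • b = K • a + u := le_antisymm hu2 hu1
        by_cases hu : u = 0
        · rw [hu, add_zero] at hEq
          have h3 : a + K • a ≤ b + K • a := by
            calc a + K • a = (K + 1) • a := by rw [succ_nsmul]; abel
              _ ≤ (K + 1) • b := hK (K + 1) (by omega)
              _ = K • b + b := succ_nsmul b K
              _ = b + K • a := by rw [hEq]; abel
          have hcpt : CuWayBelow ((K + 1) • a) ((K + 1) • a) := wb_smul hS haa (K + 1)
          have h4 : CuWayBelow (a + K • a) (b + K • a) := by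
            have e1 : a + K • a ≤ (K + 1) • a := by rw [succ_nsmul]; abel_nf; exact le_rfl
            have e2 : (K + 1) • a ≤ b + K • a := by
              calc (K + 1) • a = a + K • a := by rw [succ_nsmul]; abel
                _ ≤ b + K • a := h3
            exact wb_mono e1 hcpt e2
          exact (wb_le hS ha').trans (wb_le hS (hWC a b (K • a) h4))
        · obtain ⟨n, hn⟩ := cu_full hS hsimple hu a a haa
          have hfin : (n * K + 1) • a ≤ (n * K) • b := by
            calc (n * K + 1) • a = (n * K) • a + 1 • a := add_nsmul a _ _
              _ ≤ (n * K) • a + n • u := by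
                  refine cu_add_le_add hS le_rfl ?_
                  rw [one_nsmul]; exact hn
              _ = n • (K • a) + n • u := by rw [mul_nsmul' a n K]
              _ = n • (K • a + u) := (nsmul_add _ _ n).symm
              _ = n • (K • b) := by rw [← hEq]
              _ = (n * K) • b := (mul_nsmul' b n K).symm
          exact (wb_le hS ha').trans (hAU a b ⟨n * K, hfin⟩)
      · obtain ⟨n, hn⟩ := cu_full hS hsimple hx a a' ha'
        rcases Nat.eq_zero_or_pos n with rfl | hnpos
        · rw [zero_nsmul] at hn
          exact hn.trans (hS.zero_le b)
        · set K' := n * K with hK'def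
          have hKK' : K ≤ K' := by
            calc K = 1 * K := (one_mul K).symm
              _ ≤ n * K := Nat.mul_le_mul_right K hnpos
          have h5 : K' • a' + K' • x ≤ K' • b := by
            calc K' • a' + K' • x = K' • (a' + x) := (nsmul_add a' x K').symm
              _ ≤ K' • a := cu_smul_le hS hx1 K'
              _ ≤ K' • b := hK K' hKK'
          have h6 : K • a' ≤ K' • x := by
            calc K • a' ≤ K • (n • x) := cu_smul_le hS hn K
              _ = (K * n) • x := (mul_nsmul' x K n).symm
              _ = K' • x := by rw [hK'def, Nat.mul_comm]
          have h7 : (K' + K) • a' ≤ K' • b := by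
            calc (K' + K) • a' = K' • a' + K • a' := add_nsmul a' _ _
              _ ≤ K' • a' + K' • x := cu_add_le_add hS le_rfl h6
              _ ≤ K' • b := h5
          have h8 : (K' + 1) • a' ≤ (K' + K) • a' := cu_smul_coeff_le hS a' (by omega)
          exact hAU a' b ⟨K', h8.trans h7⟩
end
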